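/- arXiv:1908.00306 — 2 statements merged into one kernel-verified Lean document; each statement's English description precedes it below -/
import Mathlib

section
/- Let ψ : ℝ → ℝ be twice continuously differentiable with ψ(x) ≥ 0 for all x ∈ ℝ, and suppose there exists C₁ > 0 such that |ψ''(x)| ≤ C₁(1 + |ψ'(x)|) for all x ∈ ℝ. Then there exists a constant C > 0, depending only on C₁, such that |ψ'(x)| ≤ C(1 + ψ(x)) for every x ∈ ℝ. -/
/-!
Where `|ψ'(x)| ≥ 1`, Grönwall's inequality applied to `|ψ''| ≤ K(1 + |ψ'|)` keeps `|ψ'|` below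
`3|ψ'(x)|` on a window of length `1/(8K)` around `x`, so by the mean value theorem `ψ'` keeps at
least half its value and its sign there. Following `ψ` across that window in the direction in
which it decreases, and using `ψ ≥ 0`, gives `|ψ'(x)| / (16K) ≤ ψ(x)`.
-/

open Real Set

section SlowVariation

variable {g : ℝ → ℝ} {K : ℝ}

theorem abs_le_three_mul_of_abs_deriv_le (hK : 0 < K) (hg : Differentiable ℝ g)
    (hg' : ∀ y, |deriv g y| ≤ K * (1 + |g y|)) {a : ℝ} (ha : 1 ≤ |g a|) :
    ∀ t ∈ Icc a (a + 1 / (8 * K)), |g t| ≤ 3 * |g a| := by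
  intro t ht
  have hgronwall := norm_le_gronwallBound_of_norm_deriv_right_le (δ := |g a|) (K := K) (ε := K)
    hg.continuous.continuousOn (fun s _ => (hg s).hasDerivAt.hasDerivWithinAt) le_rfl
    (fun s _ => by simp only [Real.norm_eq_abs]; linarith [hg' s]) t ht
  rw [gronwallBound_of_K_ne_0 hK.ne', div_self hK.ne', Real.norm_eq_abs] at hgronwall
  have hKt : K * (t - a) ≤ 1 / 8 := by
    have := (le_div_iff₀' (by positivity)).1 (sub_le_iff_le_add'.2 ht.2)
    linarith
  have hexp : exp (K * (t - a)) ≤ 2 :=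
    calc exp (K * (t - a)) ≤ exp (log 2) := exp_le_exp.2 (by linarith [log_two_gt_d9])
      _ = 2 := exp_log two_pos
  nlinarith

theorem abs_sub_le_half_of_abs_deriv_le (hK : 0 < K) (hg : Differentiable ℝ g)
    (hg' : ∀ y, |deriv g y| ≤ K * (1 + |g y|)) {a : ℝ} (ha : 1 ≤ |g a|) :
    ∀ t ∈ Icc a (a + 1 / (8 * K)), |g t - g a| ≤ |g a| / 2 := by
  have hbound : ∀ s ∈ Ico a (a + 1 / (8 * K)), ‖deriv g s‖ ≤ 4 * K * |g a| := fun s hs =>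
    calc ‖deriv g s‖ ≤ K * (1 + |g s|) := hg' s
      _ ≤ K * (1 + 3 * |g a|) := by
        gcongr; exact abs_le_three_mul_of_abs_deriv_le hK hg hg' ha s (Ico_subset_Icc_self hs)
      _ ≤ 4 * K * |g a| := by nlinarith
  intro t ht
  calc |g t - g a| ≤ 4 * K * |g a| * (t - a) :=
        norm_image_sub_le_of_norm_deriv_le_segment'
          (fun s _ => (hg s).hasDerivAt.hasDerivWithinAt) hbound t ht
    _ ≤ 4 * K * |g a| * (1 / (8 * K)) := by gcongr; linarith [ht.2]
    _ = |g a| / 2 := by field_simp; ring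

theorem abs_sub_le_half_of_abs_deriv_le' (hK : 0 < K) (hg : Differentiable ℝ g)
    (hg' : ∀ y, |deriv g y| ≤ K * (1 + |g y|)) {a : ℝ} (ha : 1 ≤ |g a|) :
    ∀ t ∈ Icc (a - 1 / (8 * K)) a, |g t - g a| ≤ |g a| / 2 := by
  intro t ht
  have hreflect := abs_sub_le_half_of_abs_deriv_le (g := fun y => g (-y)) hK
    (hg.comp differentiable_neg) (fun y => by simpa [deriv_comp_neg] using hg' (-y))
    (a := -a) (by simpa using ha) (-t) ⟨by linarith [ht.2], by linarith [ht.1]⟩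
  simpa using hreflect

end SlowVariation

theorem abs_deriv_le_of_one_le_abs_deriv {ψ : ℝ → ℝ} {K : ℝ} (hK : 0 < K)
    (hψ : Differentiable ℝ ψ) (hψ' : Differentiable ℝ (deriv ψ))
    (hψ'' : ∀ y, |deriv (deriv ψ) y| ≤ K * (1 + |deriv ψ y|)) (hψ_nonneg : ∀ y, 0 ≤ ψ y)
    {x : ℝ} (hx : 1 ≤ |deriv ψ x|) : |deriv ψ x| ≤ 16 * K * ψ x := by
  set r := 1 / (8 * K) with hr
  have hr_pos : 0 < r := by positivity
  have hr_mul : 16 * K * r = 2 := by rw [hr]; field_simp; norm_num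
  have hmvt := abs_sub_le_half_of_abs_deriv_le hK hψ' hψ'' hx
  have hmvt' := abs_sub_le_half_of_abs_deriv_le' hK hψ' hψ'' hx
  rcases le_total 0 (deriv ψ x) with hpos | hneg
  · rw [abs_of_nonneg hpos] at hmvt' ⊢
    have hincr := convex_Icc (x - r) x |>.mul_sub_le_image_sub_of_le_deriv
      hψ.continuous.continuousOn hψ.differentiableOn (C := deriv ψ x / 2)
      (fun y hy => by linarith [(abs_le.1 (hmvt' y (interior_subset hy))).1])
      (x - r) (left_mem_Icc.2 (by linarith)) x (right_mem_Icc.2 (by linarith)) (by linarith)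
    nlinarith [hψ_nonneg (x - r)]
  · rw [abs_of_nonpos hneg] at hmvt ⊢
    have hdecr := convex_Icc x (x + r) |>.image_sub_le_mul_sub_of_deriv_le
      hψ.continuous.continuousOn hψ.differentiableOn (C := deriv ψ x / 2)
      (fun y hy => by linarith [(abs_le.1 (hmvt y (interior_subset hy))).2])
      x (left_mem_Icc.2 (by linarith)) (x + r) (right_mem_Icc.2 (by linarith)) (by linarith)
    nlinarith [hψ_nonneg (x + r)]

/-- If ψ is nonnegative, of class C², and `|ψ''| ≤ C₁(1 + |ψ'|)`, then
`|ψ'| ≤ C (1 + ψ)` for a constant `C > 0` depending only on `C₁`. -/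
theorem deriv_le_of_A2 (C₁ : ℝ) (hC₁ : 0 < C₁) :
    ∃ C : ℝ, 0 < C ∧ ∀ ψ : ℝ → ℝ, ContDiff ℝ 2 ψ → (∀ x : ℝ, 0 ≤ ψ x) →
      (∀ x : ℝ, |deriv (deriv ψ) x| ≤ C₁ * (1 + |deriv ψ x|)) →
      ∀ x : ℝ, |deriv ψ x| ≤ C * (1 + ψ x) := by
  refine ⟨1 + 16 * C₁, by positivity, fun ψ hψ hψ_nonneg hψ'' x => ?_⟩
  obtain ⟨hψ_diff, -, hψ'_smooth⟩ := contDiff_succ_iff_deriv (n := 1).mp hψ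
  have hψx := hψ_nonneg x
  rcases le_or_gt 1 |deriv ψ x| with hlarge | hsmall
  · have := abs_deriv_le_of_one_le_abs_deriv hC₁ hψ_diff
      (hψ'_smooth.differentiable one_ne_zero) hψ'' hψ_nonneg hlarge
    nlinarith
  · nlinarith
end

section
/- Let (D, 𝒜, μ) be a measure space, let (hₙ)_{n∈ℕ} be functions ℝ → ℝ such that each hₙ is Lipschitz continuous with constant Lₙ ≥ 0 and hₙ(1) = 0, with Σ_{n=0}^∞ Lₙ² < ∞, and let ε > 0. Then for every measurable σ : D → ℝ one has Σ_{n=0}^∞ ∫_D s_ε'(σ(ξ)) |hₙ(σ(ξ))|² dμ(ξ) ≤ (Σ_{n=0}^∞ Lₙ²) ∫_D ((σ(ξ) - 1)₊)² dμ(ξ). -/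
open MeasureTheory Asymptotics

/-- The smooth approximation `s_ε` of the positive part `r ↦ (r-1)₊`. -/
noncomputable def sApprox (ε : ℝ) (r : ℝ) : ℝ :=
  if r ≤ 1 then 0 else if r ≤ 1 + ε then (r - 1) ^ 2 / (2 * ε) else r - 1 - ε / 2

/-
Writing `s_ε(r) = ((r-1)₊² - (r-1-ε)₊²)/(2ε)` and using that `t ↦ t₊²` has derivative `2t₊`,
one gets `s_ε'(r) = ((r-1)₊ - (r-1-ε)₊)/ε`, which is at most `1` and vanishes for `r ≤ 1`.
For `r > 1` the Lipschitz bound and `hₙ(1) = 0` give `|hₙ(r)| ≤ Lₙ (r-1)`, so the `n`-th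
integrand is at most `Lₙ² ((σ-1)₊)²`; integrate and sum over `n`.
-/

theorem hasDerivAt_of_norm_sub_le_sq {𝕜 E : Type*} [NontriviallyNormedField 𝕜]
    [NormedAddCommGroup E] [NormedSpace 𝕜 E] {f : 𝕜 → E} {f' : E} {x : 𝕜} (C : ℝ)
    (hf : ∀ y, ‖f y - f x - (y - x) • f'‖ ≤ C * ‖y - x‖ ^ 2) : HasDerivAt f f' x :=
  HasDerivAt.of_isLittleO <|
    (IsBigO.of_bound C (Filter.Eventually.of_forall fun y => by simpa using hf y)).trans_isLittleO
      (isLittleO_pow_sub_sub x one_lt_two)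

theorem abs_sq_max_zero_sub_le (x y : ℝ) :
    |max y 0 ^ 2 - max x 0 ^ 2 - (y - x) * (2 * max x 0)| ≤ 1 * |y - x| ^ 2 := by
  rw [sq_abs, one_mul, abs_le]
  rcases le_total 0 x with hx | hx <;> rcases le_total 0 y with hy | hy <;>
    simp only [max_eq_left, max_eq_right, hx, hy] <;> constructor <;> nlinarith

theorem hasDerivAt_sq_max_zero (x : ℝ) :
    HasDerivAt (fun y : ℝ => max y 0 ^ 2) (2 * max x 0) x :=
  hasDerivAt_of_norm_sub_le_sq 1 fun y => by
    simpa only [Real.norm_eq_abs, smul_eq_mul] using abs_sq_max_zero_sub_le x y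

theorem sApprox_eq (ε : ℝ) (hε : 0 < ε) (r : ℝ) :
    sApprox ε r = (max (r - 1) 0 ^ 2 - max (r - 1 - ε) 0 ^ 2) / (2 * ε) := by
  unfold sApprox
  split_ifs with h₁ h₂
  · rw [max_eq_right (by linarith), max_eq_right (by linarith)]
    simp
  · rw [max_eq_left (by linarith), max_eq_right (by linarith)]
    simp
  · rw [max_eq_left (by linarith), max_eq_left (by linarith)]
    field_simp
    ring

theorem deriv_sApprox (ε : ℝ) (hε : 0 < ε) (r : ℝ) :
    deriv (sApprox ε) r = (max (r - 1) 0 - max (r - 1 - ε) 0) / ε := by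
  have hpos := (hasDerivAt_sq_max_zero (r - 1)).comp_sub_const r 1
  have hshift := (hasDerivAt_sq_max_zero (r - (1 + ε))).comp_sub_const r (1 + ε)
  rw [funext (sApprox_eq ε hε)]
  simp only [sub_sub]
  refine ((hpos.sub hshift).div_const (2 * ε)).deriv.trans ?_
  field_simp

theorem deriv_sApprox_of_le_one (ε : ℝ) (hε : 0 < ε) {r : ℝ} (hr : r ≤ 1) :
    deriv (sApprox ε) r = 0 := by
  rw [deriv_sApprox ε hε, max_eq_right (by linarith), max_eq_right (by linarith)]
  simp

theorem deriv_sApprox_le_one (ε : ℝ) (hε : 0 < ε) (r : ℝ) : deriv (sApprox ε) r ≤ 1 := by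
  rw [deriv_sApprox ε hε, div_le_one hε]
  rcases le_total (r - 1 - ε) 0 with h | h
  · rw [max_eq_right h, sub_zero]
    exact max_le (by linarith) hε.le
  · rw [max_eq_left h, max_eq_left (by linarith)]
    linarith

theorem deriv_sApprox_mul_sq_le (ε : ℝ) (hε : 0 < ε) {g : ℝ → ℝ} {K r : ℝ}
    (hg : |g r| ≤ K * |r - 1|) :
    deriv (sApprox ε) r * |g r| ^ 2 ≤ K ^ 2 * max (r - 1) 0 ^ 2 := by
  rcases le_or_gt r 1 with hr | hr
  · rw [deriv_sApprox_of_le_one ε hε hr, zero_mul]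
    positivity
  · rw [max_eq_left (by linarith), ← abs_of_pos (sub_pos.mpr hr), ← mul_pow]
    calc deriv (sApprox ε) r * |g r| ^ 2 ≤ 1 * |g r| ^ 2 :=
          mul_le_mul_of_nonneg_right (deriv_sApprox_le_one ε hε r) (by positivity)
      _ ≤ (K * |r - 1|) ^ 2 := by
          rw [one_mul]
          exact pow_le_pow_left₀ (abs_nonneg _) hg 2

theorem ENNReal.tsum_le_ofReal_tsum_mul {a : ℕ → ENNReal} {c : ℕ → ℝ} {b : ENNReal}
    (hc : ∀ n, 0 ≤ c n) (hsum : Summable c) (hle : ∀ n, a n ≤ ENNReal.ofReal (c n) * b) :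
    ∑' n, a n ≤ ENNReal.ofReal (∑' n, c n) * b := by
  rw [ENNReal.ofReal_tsum_of_nonneg hc hsum, ← ENNReal.tsum_mul_right]
  exact ENNReal.tsum_le_tsum hle

theorem ito_correction_estimate_general {D : Type*} [MeasurableSpace D] (μ : Measure D)
    (h : ℕ → ℝ → ℝ) (L : ℕ → ℝ)
    (hlip : ∀ n, ∀ x y : ℝ, |h n x - h n y| ≤ L n * |x - y|)
    (h1 : ∀ n, h n 1 = 0) (hsum : Summable fun n => (L n) ^ 2)
    (ε : ℝ) (hε : 0 < ε) (σ : D → ℝ) :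
    (∑' n : ℕ, ∫⁻ ξ, ENNReal.ofReal (deriv (sApprox ε) (σ ξ) * |h n (σ ξ)| ^ 2) ∂μ)
      ≤ ENNReal.ofReal (∑' n : ℕ, (L n) ^ 2) *
        ∫⁻ ξ, ENNReal.ofReal ((max (σ ξ - 1) 0) ^ 2) ∂μ := by
  refine ENNReal.tsum_le_ofReal_tsum_mul (fun n => sq_nonneg _) hsum fun n => ?_
  rw [← lintegral_const_mul' _ _ ENNReal.ofReal_ne_top]
  refine lintegral_mono fun ξ => ?_
  have hvanish : |h n (σ ξ)| ≤ L n * |σ ξ - 1| := by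
    simpa [h1 n] using hlip n (σ ξ) 1
  rw [← ENNReal.ofReal_mul (sq_nonneg _)]
  exact ENNReal.ofReal_le_ofReal (deriv_sApprox_mul_sq_le ε hε hvanish)

/-- The Itô correction estimate: if each `hₙ` is Lipschitz with constant `Lₙ`,
`hₙ(1) = 0` and `∑ Lₙ² < ∞`, then
`∑ₙ ∫ s_ε'(σ) |hₙ(σ)|² ≤ (∑ₙ Lₙ²) ∫ ((σ-1)₊)²`. -/
theorem ito_correction_estimate {D : Type*} [MeasurableSpace D] (μ : Measure D)
    (h : ℕ → ℝ → ℝ) (L : ℕ → ℝ) (hL : ∀ n, 0 ≤ L n)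
    (hlip : ∀ n, ∀ x y : ℝ, |h n x - h n y| ≤ L n * |x - y|)
    (h1 : ∀ n, h n 1 = 0) (hsum : Summable fun n => (L n) ^ 2)
    (ε : ℝ) (hε : 0 < ε) (σ : D → ℝ) (hσ : Measurable σ) :
    (∑' n : ℕ, ∫⁻ ξ, ENNReal.ofReal (deriv (sApprox ε) (σ ξ) * |h n (σ ξ)| ^ 2) ∂μ)
      ≤ ENNReal.ofReal (∑' n : ℕ, (L n) ^ 2) *
        ∫⁻ ξ, ENNReal.ofReal ((max (σ ξ - 1) 0) ^ 2) ∂μ :=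
  ito_correction_estimate_general μ h L hlip h1 hsum ε hε σ
end
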